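/- For the three-dimensional scalar-field system with γ = 2/3 (equations (scalar-field-A)): Σ' = C₂(Σ³ - A²Σ) + Σ(-A²λ² + 2w² - 2)/2 + (w - Aλ)(Aλ + w)/C₂ + 2C₂²Σ³/λ², A' = -A³λ²/2 + AC₂(Σ² - A²) + 2AC₂²Σ²/λ² + A(2Σ + w² + 1), w' = w(C₂(λ²(Σ² - A²) + 2C₂Σ² + 2Σ)/λ² - A²λ²/2 + Σ + w² + 1), with λ > 0 and C₂ > 0, the point (Σ,A,w) = (λ/√(C₂(2C₂+λ²)), 0, 0) is an equilibrium whose Jacobian has eigenvalues {2, 2λ/√(C₂(2C₂+λ²)) + 2, √(C₂(2C₂+λ²))/(C₂λ) + 2}; since all three are positive, it is a hyperbolic source for all λ > 0, C₂ > 0. -/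

import Mathlib

/-!
On the `Σ`-axis the system reduces to `Σ' = ((C₂ + 2C₂²/λ²)Σ² - 1)Σ`, and
`Σ = λ/√(C₂(2C₂+λ²))` is a root of `(C₂ + 2C₂²/λ²)Σ² = 1`. Along each coordinate axis through
this point the vector field is a cubic polynomial in the displacement whose linear coefficient is
a multiple of that axis, so the three coordinate vectors are eigenvectors of the Jacobian, with
eigenvalues `2`, `2Σ + 2` and `2C₂Σ/λ² + Σ + 2 = √(C₂(2C₂+λ²))/(C₂λ) + 2`.
-/

noncomputable section

/-- The three-dimensional scalar-field system (γ = 2/3 case) in `(Σ, A, w)`,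
with parameters `C₂` and `lam` (= λ). -/
def Fsf (C₂ lam : ℝ) : ℝ × ℝ × ℝ → ℝ × ℝ × ℝ := fun p =>
  let S := p.1; let A := p.2.1; let w := p.2.2
  (C₂ * (S ^ 3 - A ^ 2 * S) + S * (-(A ^ 2 * lam ^ 2) + 2 * w ^ 2 - 2) / 2 +
     (w - A * lam) * (A * lam + w) / C₂ + 2 * C₂ ^ 2 * S ^ 3 / lam ^ 2,
   -(A ^ 3 * lam ^ 2) / 2 + A * C₂ * (S ^ 2 - A ^ 2) +
     2 * A * C₂ ^ 2 * S ^ 2 / lam ^ 2 + A * (2 * S + w ^ 2 + 1),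
   w * (C₂ * (lam ^ 2 * (S ^ 2 - A ^ 2) + 2 * C₂ * S ^ 2 + 2 * S) / lam ^ 2 -
     A ^ 2 * lam ^ 2 / 2 + S + w ^ 2 + 1))

section LineDeriv

variable {𝕜 E F : Type*} [NontriviallyNormedField 𝕜] [NormedAddCommGroup E] [NormedSpace 𝕜 E]
  [NormedAddCommGroup F] [NormedSpace 𝕜 F]

theorem HasLineDerivAt.hasEigenvalue_fderiv {f : E → E} {x v : E} {μ : 𝕜}
    (hf : DifferentiableAt 𝕜 f x) (hv : v ≠ 0) (h : HasLineDerivAt 𝕜 f (μ • v) x v) :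
    Module.End.HasEigenvalue (fderiv 𝕜 f x : E →ₗ[𝕜] E) μ :=
  Module.End.hasEigenvalue_of_hasEigenvector
    ⟨Module.End.mem_eigenspace_iff.mpr ((hf.hasFDerivAt.hasLineDerivAt v).unique h), hv⟩

theorem hasLineDerivAt_of_cubic {f : E → F} {x v : E} (b c d : F)
    (h : ∀ t : 𝕜, f (x + t • v) = f x + t • b + t ^ 2 • c + t ^ 3 • d) :
    HasLineDerivAt 𝕜 f b x v := by
  have hcubic : HasDerivAt (fun t : 𝕜 => f x + t • b + t ^ 2 • c + t ^ 3 • d)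
      ((1 : 𝕜) • b + ((2 : ℕ) * 0 ^ 1 * 1 : 𝕜) • c + ((3 : ℕ) * 0 ^ 2 * 1 : 𝕜) • d) 0 :=
    (((hasDerivAt_id (0 : 𝕜)).smul_const b).const_add (f x)).add
      (((hasDerivAt_id (0 : 𝕜)).pow 2).smul_const c) |>.add
      (((hasDerivAt_id (0 : 𝕜)).pow 3).smul_const d)
  simp only [one_smul, pow_one, mul_zero, zero_mul, zero_smul, add_zero, ne_eq,
    OfNat.ofNat_ne_zero, not_false_eq_true, zero_pow] at hcubic
  exact hcubic.congr_of_eventuallyEq (Filter.Eventually.of_forall h)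

end LineDeriv

theorem differentiable_Fsf (C₂ lam : ℝ) : Differentiable ℝ (Fsf C₂ lam) := by
  unfold Fsf
  fun_prop

section AxisEquilibrium

variable {C₂ lam s : ℝ}

theorem Fsf_axis_eq_zero (hs : (C₂ + 2 * C₂ ^ 2 / lam ^ 2) * s ^ 2 = 1) :
    Fsf C₂ lam (s, 0, 0) = 0 := by
  simp only [Fsf, Prod.ext_iff, Prod.fst_zero, Prod.snd_zero]
  refine ⟨?_, by simp, by simp⟩
  linear_combination s * hs

theorem hasLineDerivAt_Fsf_axis_fst (hs : (C₂ + 2 * C₂ ^ 2 / lam ^ 2) * s ^ 2 = 1) :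
    HasLineDerivAt ℝ (Fsf C₂ lam) ((2 : ℝ) • (1, 0, 0)) (s, 0, 0) (1, 0, 0) := by
  refine hasLineDerivAt_of_cubic _ (3 * (C₂ + 2 * C₂ ^ 2 / lam ^ 2) * s, 0, 0)
    (C₂ + 2 * C₂ ^ 2 / lam ^ 2, 0, 0) fun t => ?_
  simp only [Fsf, Prod.ext_iff, Prod.fst_add, Prod.snd_add, Prod.smul_fst, Prod.smul_snd,
    smul_eq_mul]
  exact ⟨by linear_combination 3 * t * hs, by ring, by ring⟩

theorem hasLineDerivAt_Fsf_axis_snd (hs : (C₂ + 2 * C₂ ^ 2 / lam ^ 2) * s ^ 2 = 1) :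
    HasLineDerivAt ℝ (Fsf C₂ lam) ((2 * s + 2) • (0, 1, 0)) (s, 0, 0) (0, 1, 0) := by
  refine hasLineDerivAt_of_cubic _ (-(C₂ * s) - s * lam ^ 2 / 2 - lam ^ 2 / C₂, 0, 0)
    (0, -(lam ^ 2) / 2 - C₂, 0) fun t => ?_
  simp only [Fsf, Prod.ext_iff, Prod.fst_add, Prod.snd_add, Prod.smul_fst, Prod.smul_snd,
    smul_eq_mul]
  exact ⟨by ring, by linear_combination t * hs, by ring⟩

theorem hasLineDerivAt_Fsf_axis_thd (hlam : lam ≠ 0)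
    (hs : (C₂ + 2 * C₂ ^ 2 / lam ^ 2) * s ^ 2 = 1) :
    HasLineDerivAt ℝ (Fsf C₂ lam) ((2 * C₂ * s / lam ^ 2 + s + 2) • (0, 0, 1)) (s, 0, 0)
      (0, 0, 1) := by
  refine hasLineDerivAt_of_cubic _ (s + 1 / C₂, 0, 0) (0, 0, 1) fun t => ?_
  simp only [Fsf, Prod.ext_iff, Prod.fst_add, Prod.snd_add, Prod.smul_fst, Prod.smul_snd,
    smul_eq_mul]
  have hlam2 : lam ^ 2 * (lam ^ 2)⁻¹ = 1 := mul_inv_cancel₀ (pow_ne_zero 2 hlam)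
  exact ⟨by ring, by ring, by linear_combination t * hs + t * C₂ * s ^ 2 * hlam2⟩

end AxisEquilibrium

/-- The point `(Σ, A, w) = (λ/√(C₂(2C₂+λ²)), 0, 0)` is an equilibrium of the
γ = 2/3 scalar-field system whose Jacobian has eigenvalues
`{2, 2λ/√(C₂(2C₂+λ²)) + 2, √(C₂(2C₂+λ²))/(C₂λ) + 2}`; all three are positive, so
it is a hyperbolic source for all `λ > 0`, `C₂ > 0`. -/
theorem Q4_hyperbolic_source (C₂ lam : ℝ) (hC : 0 < C₂) (hlam : 0 < lam) :
    letI q : ℝ × ℝ × ℝ :=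
      (lam / Real.sqrt (C₂ * (2 * C₂ + lam ^ 2)), 0, 0)
    Fsf C₂ lam q = 0 ∧
    Module.End.HasEigenvalue ((fderiv ℝ (Fsf C₂ lam) q).toLinearMap) 2 ∧
    Module.End.HasEigenvalue ((fderiv ℝ (Fsf C₂ lam) q).toLinearMap)
      (2 * lam / Real.sqrt (C₂ * (2 * C₂ + lam ^ 2)) + 2) ∧
    Module.End.HasEigenvalue ((fderiv ℝ (Fsf C₂ lam) q).toLinearMap)
      (Real.sqrt (C₂ * (2 * C₂ + lam ^ 2)) / (C₂ * lam) + 2) ∧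
    (0 : ℝ) < 2 ∧
    0 < 2 * lam / Real.sqrt (C₂ * (2 * C₂ + lam ^ 2)) + 2 ∧
    0 < Real.sqrt (C₂ * (2 * C₂ + lam ^ 2)) / (C₂ * lam) + 2 := by
  have hN : 0 < C₂ * (2 * C₂ + lam ^ 2) := by positivity
  have hr : Real.sqrt (C₂ * (2 * C₂ + lam ^ 2)) ^ 2 = C₂ * (2 * C₂ + lam ^ 2) := Real.sq_sqrt hN.le
  have hr0 : 0 < Real.sqrt (C₂ * (2 * C₂ + lam ^ 2)) := Real.sqrt_pos.2 hN
  generalize Real.sqrt (C₂ * (2 * C₂ + lam ^ 2)) = r at hr hr0 ⊢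
  have hs : (C₂ + 2 * C₂ ^ 2 / lam ^ 2) * (lam / r) ^ 2 = 1 := by
    field_simp
    linear_combination -hr
  have hμ₃ : 2 * C₂ * (lam / r) / lam ^ 2 + lam / r + 2 = r / (C₂ * lam) + 2 := by
    field_simp
    linear_combination -hr
  have eigen {v : ℝ × ℝ × ℝ} {μ : ℝ} (hv : v ≠ 0)
      (h : HasLineDerivAt ℝ (Fsf C₂ lam) (μ • v) (lam / r, 0, 0) v) :
      Module.End.HasEigenvalue (fderiv ℝ (Fsf C₂ lam) (lam / r, 0, 0)).toLinearMap μ :=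
    h.hasEigenvalue_fderiv (differentiable_Fsf C₂ lam _) hv
  have hsnd := hasLineDerivAt_Fsf_axis_snd hs
  rw [← mul_div_assoc] at hsnd
  have hthd := hasLineDerivAt_Fsf_axis_thd hlam.ne' hs
  rw [hμ₃] at hthd
  exact ⟨Fsf_axis_eq_zero hs, eigen (by simp) (hasLineDerivAt_Fsf_axis_fst hs),
    eigen (by simp) hsnd, eigen (by simp) hthd, two_pos, by positivity, by positivity⟩
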